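/- arXiv:1903.04278 — 2 statements merged into one kernel-verified Lean document; each statement's English description precedes it below -/
import Mathlib

section
/- If Σ_{t∈N(s)} |θ_{st}| < 4 for every vertex s, then the naive mean field update map F(μ)_s = S(θ_s + Σ_{t∈N(s)} θ_{st} μ_t) is a contraction on [0,1]^V with respect to the sup norm, and hence has a unique fixed point. -/
noncomputable def sigmoid (x : ℝ) : ℝ := 1 / (1 + Real.exp (-x))

noncomputable def mfUpdate {V : Type*} [Fintype V] (N : V → Finset V)
    (θE : V → V → ℝ) (θ : V → ℝ) (μ : V → ℝ) (s : V) : ℝ :=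
  sigmoid (θ s + ∑ t ∈ N s, θE s t * μ t)

/-!
Since `S' = S (1 - S) ≤ 1/4`, the sigmoid is `1/4`-Lipschitz, so coordinate `s` of the update is
`(∑_{t ∈ N(s)} |θ_{st}|) / 4`-Lipschitz for the sup metric. On a finite vertex set the largest of
these constants is `< 1`, so Banach's fixed point theorem on the complete space `V → ℝ` gives a
unique fixed point, which lies in `[0,1]^V` because the update takes values there.
-/

open NNReal

lemma sigmoid_eq_real_sigmoid : sigmoid = Real.sigmoid := by
  ext x
  simp only [sigmoid, Real.sigmoid_def, one_div]

lemma Real.lipschitzWith_sigmoid : LipschitzWith 4⁻¹ Real.sigmoid := by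
  refine lipschitzWith_of_nnnorm_deriv_le (fun x => differentiableAt_sigmoid) fun x => ?_
  rw [← NNReal.coe_le_coe, coe_nnnorm, Real.deriv_sigmoid, Real.norm_eq_abs,
    abs_of_nonneg (mul_nonneg (sigmoid_nonneg x) (sub_nonneg.2 (sigmoid_le_one x)))]
  push_cast
  nlinarith [sq_nonneg (2 * Real.sigmoid x - 1)]

lemma Finset.dist_sum_mul_le {ι : Type*} [Fintype ι] (S : Finset ι) (w x y : ι → ℝ) :
    dist (∑ i ∈ S, w i * x i) (∑ i ∈ S, w i * y i) ≤ (∑ i ∈ S, |w i|) * dist x y := by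
  rw [Real.dist_eq, ← Finset.sum_sub_distrib, Finset.sum_mul]
  refine (Finset.abs_sum_le_sum_abs _ _).trans (Finset.sum_le_sum fun i _ => ?_)
  rw [← mul_sub, abs_mul, ← Real.dist_eq]
  exact mul_le_mul_of_nonneg_left (dist_le_pi_dist x y i) (abs_nonneg _)

section MeanField

variable {V : Type*} [Fintype V] (N : V → Finset V) (θE : V → V → ℝ) (θ : V → ℝ)

lemma mfUpdate_mem_Icc (μ : V → ℝ) (s : V) : mfUpdate N θE θ μ s ∈ Set.Icc (0 : ℝ) 1 := by
  rw [mfUpdate, sigmoid_eq_real_sigmoid]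
  exact ⟨Real.sigmoid_nonneg _, Real.sigmoid_le_one _⟩

lemma lipschitzWith_mfUpdate {K : ℝ≥0} (hK : ∀ s, ∑ t ∈ N s, |θE s t| ≤ 4 * K) :
    LipschitzWith K (mfUpdate N θE θ) := by
  refine LipschitzWith.of_dist_le_mul fun μ ν => (dist_pi_le_iff (by positivity)).2 fun s => ?_
  calc dist (mfUpdate N θE θ μ s) (mfUpdate N θE θ ν s)
      ≤ 4⁻¹ * dist (∑ t ∈ N s, θE s t * μ t) (∑ t ∈ N s, θE s t * ν t) := by
        rw [mfUpdate, mfUpdate, sigmoid_eq_real_sigmoid]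
        have := Real.lipschitzWith_sigmoid.dist_le_mul (θ s + ∑ t ∈ N s, θE s t * μ t)
          (θ s + ∑ t ∈ N s, θE s t * ν t)
        rwa [dist_add_left, NNReal.coe_inv, NNReal.coe_ofNat] at this
    _ ≤ 4⁻¹ * ((∑ t ∈ N s, |θE s t|) * dist μ ν) := by
        gcongr
        exact Finset.dist_sum_mul_le _ _ _ _
    _ ≤ K * dist μ ν := by
        rw [← mul_assoc]
        gcongr
        linarith [hK s]

lemma exists_contractingWith_mfUpdate (hsmall : ∀ s, ∑ t ∈ N s, |θE s t| < 4) :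
    ∃ K, ContractingWith K (mfUpdate N θE θ) := by
  set M : ℝ≥0 := Finset.univ.sup fun s => (∑ t ∈ N s, |θE s t|).toNNReal
  have hM : M < 4 := by
    refine (Finset.sup_lt_iff (by norm_num)).2 fun s _ => ?_
    exact (Real.toNNReal_lt_iff_lt_coe (by positivity)).2 (by exact_mod_cast hsmall s)
  refine ⟨M / 4, (div_lt_one (by norm_num)).2 hM, lipschitzWith_mfUpdate N θE θ fun s => ?_⟩
  have hs : (∑ t ∈ N s, |θE s t|).toNNReal ≤ M :=
    Finset.le_sup (f := fun s => (∑ t ∈ N s, |θE s t|).toNNReal) (Finset.mem_univ s)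
  rw [NNReal.coe_div, NNReal.coe_ofNat, mul_div_cancel₀ _ four_ne_zero]
  exact Real.toNNReal_le_iff_le_coe.1 hs

end MeanField

theorem mean_field_contraction {V : Type*} [Fintype V]
    (N : V → Finset V) (θE : V → V → ℝ) (θ : V → ℝ)
    (hsmall : ∀ s, ∑ t ∈ N s, |θE s t| < 4) :
    (∃ K : ℝ, 0 ≤ K ∧ K < 1 ∧
      ∀ μ ν : V → ℝ, (∀ s, μ s ∈ Set.Icc (0 : ℝ) 1) →
        (∀ s, ν s ∈ Set.Icc (0 : ℝ) 1) →
        ‖mfUpdate N θE θ μ - mfUpdate N θE θ ν‖ ≤ K * ‖μ - ν‖) ∧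
    (∃! μ : V → ℝ, (∀ s, μ s ∈ Set.Icc (0 : ℝ) 1) ∧
      ∀ s, mfUpdate N θE θ μ s = μ s) := by
  obtain ⟨K, hF⟩ := exists_contractingWith_mfUpdate N θE θ hsmall
  refine ⟨⟨K, K.2, hF.1, fun μ ν _ _ => ?_⟩, ?_⟩
  · simpa only [dist_eq_norm] using hF.2.dist_le_mul μ ν
  have hfix : mfUpdate N θE θ hF.fixedPoint = hF.fixedPoint := hF.fixedPoint_isFixedPt
  refine ⟨hF.fixedPoint, ⟨fun s => ?_, fun s => congrFun hfix s⟩, fun ν hν => ?_⟩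
  · rw [← hfix]
    exact mfUpdate_mem_Icc N θE θ _ s
  · exact hF.fixedPoint_unique (funext hν.2)
end

section
/- Consider a discrete-time single queue evolving as Q(t+1) = max(Q(t) + a(t) − s, 0), where arrivals a(t) are i.i.d. nonnegative integer random variables with mean π and second moment E[a(t)²] ≤ σ² < ∞, and s is a constant integer service rate with π ≤ s − ε for some ε > 0. Then lim sup_{T→∞} (1/T) Σ_{t=0}^{T−1} E[Q(t)] ≤ (σ² + s²)/(2ε). -/
/-!
Drift of `Q²`: since `Q(t+1)² ≤ (Q(t) + a(t) - s)²` and `Q(t)` depends only on `a(0), …, a(t-1)`,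
independence gives `E[Q(t+1)²] ≤ E[Q(t)²] - 2ε E[Q(t)] + E[(a - s)²]`. Telescoping from `Q(0) = 0`
yields `2ε ∑_{t<T} E[Q(t)] ≤ T E[(a - s)²] ≤ T (σ² + s²)`.

The other cases are about junk values. If `E[a] = ∞`, no `Q(t + 1)` is integrable, so all the
integrals are `0`. If `E[a] < ∞ = E[a²]`, the averages diverge, so the real `limsup` is `0`: each
arrival keeps the queue above `a(u) - (t - u) s` at time `t`, these contributions add up, and so
`E[Q(t)] ≥ E[min(a, t s)²] / (2s) - E[a] → ∞`.
-/

open MeasureTheory ProbabilityTheory Filter Finset Topology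

noncomputable def queue {Ω : Type*} (s : ℝ) (a : ℕ → Ω → ℝ) : ℕ → Ω → ℝ
  | 0 => fun _ => 0
  | t + 1 => fun ω => max (queue s a t ω + a t ω - s) 0

lemma max_sub_add_max_sub_le {x y s : ℝ} (hx : 0 ≤ x) (hy : 0 ≤ y) (hs : 0 ≤ s) :
    max (x - s) 0 + max (y - s) 0 ≤ max (x + y - s) 0 := by
  rcases le_total x s with h | h <;> rcases le_total y s with h' | h' <;>
    simp only [max_eq_right, max_eq_left, sub_nonpos, sub_nonneg, h, h'] <;>
    first | (apply le_max_of_le_left; linarith) | simp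

lemma sum_max_sub_le {ι : Type*} (S : Finset ι) {y : ι → ℝ} {s : ℝ} (hy : ∀ i, 0 ≤ y i)
    (hs : 0 ≤ s) : ∑ i ∈ S, max (y i - s) 0 ≤ max (∑ i ∈ S, y i - s) 0 := by
  classical
  induction S using Finset.induction_on with
  | empty => simp
  | insert i S hi ih =>
    rw [sum_insert hi, sum_insert hi]
    calc max (y i - s) 0 + ∑ j ∈ S, max (y j - s) 0
        ≤ max (y i - s) 0 + max (∑ j ∈ S, y j - s) 0 := by gcongr
      _ ≤ max (y i + ∑ j ∈ S, y j - s) 0 :=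
        max_sub_add_max_sub_le (hy i) (sum_nonneg fun j _ => hy j) hs

lemma mul_sub_le_sum_max_sub (x s : ℝ) {k t : ℕ} (hk : k ≤ t) :
    k * x - s * (k * (k + 1) / 2) ≤ ∑ u ∈ range t, max (x - (t - u) * s) 0 := by
  induction t generalizing k with
  | zero => simp_all
  | succ t ih =>
    have hpeel : ∑ u ∈ range (t + 1), max (x - ((t + 1 : ℕ) - u) * s) 0
        = ∑ u ∈ range t, max (x - (t - u) * s) 0 + max (x - (t + 1) * s) 0 := by
      rw [sum_range_succ']
      congr 1
      · refine sum_congr rfl fun u _ => ?_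
        push_cast
        ring_nf
      · push_cast
        ring_nf
    rw [hpeel]
    rcases Nat.lt_or_eq_of_le hk with hk | rfl
    · linarith [ih (Nat.lt_succ_iff.1 hk), le_max_right (x - (t + 1) * s) 0]
    · have := ih le_rfl
      have := le_max_left (x - (t + 1) * s) 0
      push_cast
      linarith

lemma sq_min_div_sub_le_sum_max_sub {x s : ℝ} (hx : 0 ≤ x) (hs : 0 < s) (t : ℕ) :
    min x (t * s) ^ 2 / (2 * s) - x ≤ ∑ u ∈ range t, max (x - (t - u) * s) 0 := by
  rw [sub_le_iff_le_add, div_le_iff₀ (by positivity)]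
  rcases le_total ⌊x / s⌋₊ t with hk | hk
  · have h := mul_sub_le_sum_max_sub x s hk
    have hlo : ⌊x / s⌋₊ * s ≤ x := (le_div_iff₀ hs).1 (Nat.floor_le (by positivity))
    have hhi : x < (⌊x / s⌋₊ + 1) * s := (div_lt_iff₀ hs).1 (Nat.lt_floor_add_one _)
    have hmin : min x (t * s) ^ 2 ≤ x ^ 2 :=
      pow_le_pow_left₀ (le_min hx (by positivity)) (min_le_left _ _) 2
    nlinarith
  · have h := mul_sub_le_sum_max_sub x s (le_refl t)
    have hts : t * s ≤ x := (le_div_iff₀ hs).1 ((Nat.le_floor_iff (by positivity)).1 hk)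
    rw [min_eq_right hts]
    have hgap : 0 ≤ s * (t + 1) * (x - t * s) := by have := sub_nonneg.2 hts; positivity
    nlinarith [mul_le_mul_of_nonneg_right h (by positivity : (0:ℝ) ≤ 2 * s),
      (by positivity : (0:ℝ) ≤ s ^ 2 * t)]

section Pathwise

variable {Ω : Type*} {s : ℝ} {a : ℕ → Ω → ℝ}

@[simp]
lemma queue_zero (ω : Ω) : queue s a 0 ω = 0 := rfl

lemma queue_succ (t : ℕ) (ω : Ω) : queue s a (t + 1) ω = max (queue s a t ω + a t ω - s) 0 := rfl

lemma queue_nonneg (t : ℕ) (ω : Ω) : 0 ≤ queue s a t ω := by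
  cases t with
  | zero => rfl
  | succ t => exact le_max_right _ _

lemma queue_le_sum (hs : 0 ≤ s) (ha : ∀ t ω, 0 ≤ a t ω) (t : ℕ) (ω : Ω) :
    queue s a t ω ≤ ∑ u ∈ range t, a u ω := by
  induction t with
  | zero => simp
  | succ t ih =>
    rw [queue_succ, sum_range_succ]
    exact max_le (by linarith) (add_nonneg (sum_nonneg fun u _ => ha u ω) (ha t ω))

lemma sum_max_sub_le_queue (hs : 0 ≤ s) (ha : ∀ t ω, 0 ≤ a t ω) (t : ℕ) (ω : Ω) :
    ∑ u ∈ range t, max (a u ω - (t - u) * s) 0 ≤ queue s a t ω := by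
  induction t with
  | zero => simp
  | succ t ih =>
    have hshift (u : ℕ) : max (a u ω - ((t + 1 : ℕ) - u) * s) 0
        = max (max (a u ω - (t - u) * s) 0 - s) 0 := by
      rw [← max_sub_sub_right, max_assoc, zero_sub, max_eq_right (neg_nonpos.2 hs)]
      push_cast; ring_nf
    calc ∑ u ∈ range (t + 1), max (a u ω - ((t + 1 : ℕ) - u) * s) 0
        = ∑ u ∈ range t, max (max (a u ω - (t - u) * s) 0 - s) 0 + max (a t ω - s) 0 := by
          simp only [sum_range_succ, hshift, sub_self, zero_mul, sub_zero, max_eq_left (ha t ω)]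
      _ ≤ max (∑ u ∈ range t, max (a u ω - (t - u) * s) 0 - s) 0 + max (a t ω - s) 0 := by
          gcongr
          exact sum_max_sub_le _ (fun u => le_max_right _ _) hs
      _ ≤ max (∑ u ∈ range t, max (a u ω - (t - u) * s) 0 + a t ω - s) 0 :=
          max_sub_add_max_sub_le (sum_nonneg fun u _ => le_max_right _ _) (ha t ω) hs
      _ ≤ queue s a (t + 1) ω := max_le_max (by linarith) le_rfl

lemma measurable_queue {m : MeasurableSpace Ω} {t : ℕ} (ha : ∀ u < t, Measurable[m] (a u)) :
    Measurable[m] (queue s a t) := by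
  induction t with
  | zero => exact measurable_const
  | succ t ih =>
    exact ((ih fun u hu => ha u (hu.trans t.lt_succ_self)).add (ha t t.lt_succ_self)
      |>.sub_const s).max measurable_const

end Pathwise

lemma limsup_cesaro_le {x : ℕ → ℝ} {c : ℝ} (hx : ∀ t, 0 ≤ x t)
    (h : ∀ T : ℕ, ∑ t ∈ range T, x t ≤ T * c) :
    limsup (fun T : ℕ => (1 / (T : ℝ)) * ∑ t ∈ range T, x t) atTop ≤ c := by
  refine limsup_le_of_le (isCoboundedUnder_le_of_le atTop fun T =>
    mul_nonneg (by positivity) (sum_nonneg fun t _ => hx t)) ?_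
  filter_upwards [eventually_ge_atTop 1] with T hT
  have hT : (0 : ℝ) < T := by exact_mod_cast hT
  rw [one_div_mul_eq_div, div_le_iff₀ hT, mul_comm]
  exact h T

lemma tendsto_cesaro_atTop {x : ℕ → ℝ} (hx0 : ∀ t, 0 ≤ x t) (hx : Tendsto x atTop atTop) :
    Tendsto (fun T : ℕ => (1 / (T : ℝ)) * ∑ t ∈ range T, x t) atTop atTop := by
  refine tendsto_atTop.2 fun b => ?_
  obtain ⟨n, hn⟩ := eventually_atTop.1 (tendsto_atTop.1 hx (2 * |b|))
  filter_upwards [eventually_ge_atTop (max (2 * n) 1)] with T hT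
  have hT1 : (0 : ℝ) < T := by exact_mod_cast (le_max_right _ _).trans hT
  have h2n : (2 * n : ℝ) ≤ T := by exact_mod_cast (le_max_left _ _).trans hT
  have htail : (T - n : ℝ) * (2 * |b|) ≤ ∑ t ∈ range T, x t :=
    calc (T - n : ℝ) * (2 * |b|) = ∑ t ∈ Ico n T, 2 * |b| := by
          rw [sum_const, Nat.card_Ico, nsmul_eq_mul, Nat.cast_sub (by omega)]
      _ ≤ ∑ t ∈ Ico n T, x t := sum_le_sum fun t ht => hn t (mem_Ico.1 ht).1
      _ ≤ ∑ t ∈ range T, x t :=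
          sum_le_sum_of_subset_of_nonneg
            (by rw [range_eq_Ico]; exact Ico_subset_Ico (Nat.zero_le n) le_rfl) fun t _ _ => hx0 t
  rw [one_div_mul_eq_div, le_div_iff₀ hT1]
  nlinarith [le_abs_self b, abs_nonneg b]

lemma integrable_of_tendsto_of_integral_le {α : Type*} [MeasurableSpace α] {μ : Measure α}
    {f : ℕ → α → ℝ} {F : α → ℝ} {K : ℝ}
    (hf : ∀ n, Integrable (f n) μ) (hf0 : ∀ n, 0 ≤ᵐ[μ] f n)
    (hlim : ∀ᵐ x ∂μ, Tendsto (fun n => f n x) atTop (𝓝 (F x)))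
    (hK : ∀ n, ∫ x, f n x ∂μ ≤ K) : Integrable F μ := by
  refine ⟨aestronglyMeasurable_of_tendsto_ae _ (fun n => (hf n).1) hlim, ?_⟩
  have hbound (n : ℕ) : ∫⁻ x, ‖f n x‖ₑ ∂μ ≤ ENNReal.ofReal K := by
    rw [lintegral_enorm_of_ae_nonneg (hf0 n),
      ← ofReal_integral_eq_lintegral_ofReal (hf n) (hf0 n)]
    exact ENNReal.ofReal_le_ofReal (hK n)
  calc ∫⁻ x, ‖F x‖ₑ ∂μ = ∫⁻ x, liminf (fun n => ‖f n x‖ₑ) atTop ∂μ :=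
        lintegral_congr_ae (by filter_upwards [hlim] with x hx using hx.enorm.liminf_eq.symm)
    _ ≤ liminf (fun n => ∫⁻ x, ‖f n x‖ₑ ∂μ) atTop :=
        lintegral_liminf_le' fun n => (hf n).1.aemeasurable.enorm
    _ ≤ ENNReal.ofReal K := liminf_le_of_le (by isBoundedDefault) fun b hb => ?_
    _ < ⊤ := ENNReal.ofReal_lt_top
  obtain ⟨n, hn⟩ := hb.exists
  exact hn.trans (hbound n)

lemma ProbabilityTheory.IndepFun.integral_add_sq {Ω : Type*} [MeasurableSpace Ω] {μ : Measure Ω}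
    {X Y : Ω → ℝ} (h : IndepFun X Y μ) (hX : MemLp X 2 μ) (hY : MemLp Y 2 μ) :
    ∫ ω, (X ω + Y ω) ^ 2 ∂μ
      = ∫ ω, X ω ^ 2 ∂μ + 2 * (∫ ω, X ω ∂μ) * (∫ ω, Y ω ∂μ) + ∫ ω, Y ω ^ 2 ∂μ := by
  have hXY : Integrable (fun ω => 2 * (X ω * Y ω)) μ := (hX.integrable_mul hY).const_mul 2
  have hX2XY : Integrable (fun ω => X ω ^ 2 + 2 * (X ω * Y ω)) μ := hX.integrable_sq.add hXY
  have hexp : (fun ω => (X ω + Y ω) ^ 2) = fun ω => X ω ^ 2 + 2 * (X ω * Y ω) + Y ω ^ 2 := by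
    ext ω; ring
  rw [hexp, integral_add hX2XY hY.integrable_sq, integral_add hX.integrable_sq hXY,
    integral_const_mul, h.integral_fun_mul_eq_mul_integral hX.1 hY.1, mul_assoc]

section Probability

variable {Ω : Type*} [MeasurableSpace Ω] {μ : Measure Ω} {s : ℝ} {a : ℕ → Ω → ℝ}

lemma indepFun_queue (hmeas : ∀ t, Measurable (a t)) (hind : iIndepFun a μ) (t : ℕ) :
    IndepFun (queue s a t) (a t) μ := by
  have h := indep_iSup_of_disjoint (fun u => (hmeas u).comap_le) hind
    (S := {u | u < t}) (T := {t}) (by simp)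
  rw [_root_.iSup_singleton] at h
  rw [IndepFun_iff_Indep]
  refine indep_of_indep_of_le_left h (Measurable.comap_le (measurable_queue fun u hu => ?_))
  exact (comap_measurable (a u)).mono (le_iSup₂_of_le u hu le_rfl) le_rfl

lemma memLp_queue {p : ENNReal} (hs : 0 ≤ s) (hmeas : ∀ t, Measurable (a t))
    (ha0 : ∀ t ω, 0 ≤ a t ω) (ha : ∀ t, MemLp (a t) p μ) (t : ℕ) :
    MemLp (queue s a t) p μ := by
  refine (memLp_finsetSum (range t) fun u _ => ha u).of_le
    (measurable_queue fun u _ => hmeas u).aestronglyMeasurable (ae_of_all _ fun ω => ?_)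
  rw [Real.norm_of_nonneg (queue_nonneg t ω),
    Real.norm_of_nonneg (sum_nonneg fun u _ => ha0 u ω)]
  exact queue_le_sum hs ha0 t ω

lemma integrable_of_integrable_queue_succ [IsFiniteMeasure μ] (hmeas : ∀ t, Measurable (a t))
    (ha0 : ∀ t ω, 0 ≤ a t ω) {t : ℕ} (h : Integrable (queue s a (t + 1)) μ) :
    Integrable (a t) μ := by
  refine (h.add (integrable_const s)).mono' (hmeas t).aestronglyMeasurable
    (ae_of_all _ fun ω => ?_)
  rw [Real.norm_of_nonneg (ha0 t ω), Pi.add_apply, queue_succ]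
  linarith [le_max_left (queue s a t ω + a t ω - s) 0, queue_nonneg (s := s) (a := a) t ω]

lemma integral_queue_eq_zero [IsFiniteMeasure μ] (hmeas : ∀ t, Measurable (a t))
    (ha0 : ∀ t ω, 0 ≤ a t ω) (hident : ∀ t, IdentDistrib (a t) (a 0) μ μ)
    (ha1 : ¬ Integrable (a 0) μ) (t : ℕ) :
    ∫ ω, queue s a t ω ∂μ = 0 := by
  cases t with
  | zero => simp
  | succ t =>
    exact integral_undef fun h =>
      ha1 ((hident t).integrable_iff.1 (integrable_of_integrable_queue_succ hmeas ha0 h))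

variable [IsProbabilityMeasure μ]

lemma integral_sq_queue_succ_le (hs : 0 ≤ s) (hmeas : ∀ t, Measurable (a t))
    (ha0 : ∀ t ω, 0 ≤ a t ω) (hind : iIndepFun a μ) (ha2 : ∀ t, MemLp (a t) 2 μ) (t : ℕ) :
    ∫ ω, queue s a (t + 1) ω ^ 2 ∂μ ≤ ∫ ω, queue s a t ω ^ 2 ∂μ
      + 2 * (∫ ω, queue s a t ω ∂μ) * (∫ ω, a t ω ∂μ - s) + ∫ ω, (a t ω - s) ^ 2 ∂μ := by
  have hQ := memLp_queue hs hmeas ha0 ha2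
  have hY : MemLp (fun ω => a t ω - s) 2 μ := (ha2 t).sub (memLp_const s)
  have hind' : IndepFun (queue s a t) (fun ω => a t ω - s) μ :=
    (indepFun_queue hmeas hind t).comp measurable_id (measurable_id.sub_const s)
  calc ∫ ω, queue s a (t + 1) ω ^ 2 ∂μ ≤ ∫ ω, (queue s a t ω + (a t ω - s)) ^ 2 ∂μ := by
        refine integral_mono (hQ (t + 1)).integrable_sq ((hQ t).add hY).integrable_sq fun ω => ?_
        rw [queue_succ, add_sub_assoc]
        rw [sq_le_sq, abs_of_nonneg (le_max_right _ _)]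
        exact max_le (le_abs_self _) (abs_nonneg _)
    _ = _ := by
        rw [hind'.integral_add_sq (hQ t) hY,
          integral_sub ((ha2 t).integrable one_le_two) (integrable_const s), integral_const]
        simp

lemma two_mul_sum_integral_queue_le (hs : 0 ≤ s) (hmeas : ∀ t, Measurable (a t))
    (ha0 : ∀ t ω, 0 ≤ a t ω) (hind : iIndepFun a μ) (ha2 : ∀ t, MemLp (a t) 2 μ) {ε K : ℝ}
    (hdrift : ∀ t, ∫ ω, a t ω ∂μ ≤ s - ε) (hK : ∀ t, ∫ ω, (a t ω - s) ^ 2 ∂μ ≤ K) (T : ℕ) :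
    2 * ε * ∑ t ∈ range T, ∫ ω, queue s a t ω ∂μ ≤ T * K := by
  set V : ℕ → ℝ := fun t => ∫ ω, queue s a t ω ^ 2 ∂μ
  have hstep (t : ℕ) : 2 * ε * ∫ ω, queue s a t ω ∂μ ≤ V t - V (t + 1) + K := by
    have hQ : 0 ≤ ∫ ω, queue s a t ω ∂μ := integral_nonneg (queue_nonneg t)
    have := integral_sq_queue_succ_le hs hmeas ha0 hind ha2 t
    nlinarith [mul_le_mul_of_nonneg_left (hdrift t) hQ, hK t]
  have hVT : 0 ≤ V T := integral_nonneg fun ω => sq_nonneg _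
  calc 2 * ε * ∑ t ∈ range T, ∫ ω, queue s a t ω ∂μ
      ≤ ∑ t ∈ range T, (V t - V (t + 1) + K) := by
        rw [mul_sum]; exact sum_le_sum fun t _ => hstep t
    _ = V 0 - V T + T * K := by
        rw [sum_add_distrib, sum_range_sub', sum_const, card_range, nsmul_eq_mul]
    _ ≤ T * K := by simp [V]; linarith

lemma limsup_cesaro_integral_queue_le (hs : 0 ≤ s) (hmeas : ∀ t, Measurable (a t))
    (ha0 : ∀ t ω, 0 ≤ a t ω) (hind : iIndepFun a μ) (hident : ∀ t, IdentDistrib (a t) (a 0) μ μ)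
    (ha2 : Integrable (fun ω => a 0 ω ^ 2) μ) {ε : ℝ} (hε : 0 < ε)
    (hdrift : ∫ ω, a 0 ω ∂μ ≤ s - ε) :
    limsup (fun T : ℕ => (1 / (T : ℝ)) * ∑ t ∈ range T, ∫ ω, queue s a t ω ∂μ) atTop
      ≤ (∫ ω, a 0 ω ^ 2 ∂μ + s ^ 2) / (2 * ε) := by
  have hL2 (t : ℕ) : MemLp (a t) 2 μ := (hident t).memLp_iff.2
    ((memLp_two_iff_integrable_sq (hmeas 0).aestronglyMeasurable).2 ha2)
  have hK (t : ℕ) : ∫ ω, (a t ω - s) ^ 2 ∂μ ≤ ∫ ω, a 0 ω ^ 2 ∂μ + s ^ 2 := by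
    have hsame := ((hident t).comp (u := fun x => (x - s) ^ 2) (by fun_prop)).integral_eq
    simp only [Function.comp_apply] at hsame
    calc ∫ ω, (a t ω - s) ^ 2 ∂μ = ∫ ω, (a 0 ω - s) ^ 2 ∂μ := hsame
      _ ≤ ∫ ω, (a 0 ω ^ 2 + s ^ 2) ∂μ :=
        integral_mono ((hL2 0).sub (memLp_const s)).integrable_sq (ha2.add (integrable_const _))
          fun ω => by nlinarith [ha0 0 ω]
      _ = ∫ ω, a 0 ω ^ 2 ∂μ + s ^ 2 := by simp [integral_add ha2 (integrable_const _)]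
  refine limsup_cesaro_le (fun t => integral_nonneg (queue_nonneg t)) fun T => ?_
  have := two_mul_sum_integral_queue_le hs hmeas ha0 hind hL2
    (fun t => (hident t).integral_eq.trans_le hdrift) hK T
  rw [mul_div_assoc', le_div_iff₀ (by positivity)]
  linarith

end Probability

section Divergence

variable {Ω : Type*} [MeasurableSpace Ω] {μ : Measure Ω} [IsFiniteMeasure μ] {s : ℝ}

lemma integrable_min_sq {f : Ω → ℝ} (hf : Measurable f) (hf0 : ∀ ω, 0 ≤ f ω) (c : ℝ) :
    Integrable (fun ω => min (f ω) c ^ 2) μ := by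
  refine .of_bound ((hf.min measurable_const).pow_const 2).aestronglyMeasurable (c ^ 2)
    (ae_of_all _ fun ω => ?_)
  rw [Real.norm_of_nonneg (sq_nonneg _)]
  rcases le_total (f ω) c with h | h
  · rw [min_eq_left h]; exact pow_le_pow_left₀ (hf0 ω) h 2
  · rw [min_eq_right h]

lemma tendsto_integral_min_sq_atTop {f : Ω → ℝ} (hf : Measurable f) (hf0 : ∀ ω, 0 ≤ f ω)
    (hs : 0 < s) (h : ¬ Integrable (fun ω => f ω ^ 2) μ) :
    Tendsto (fun t : ℕ => ∫ ω, min (f ω) (t * s) ^ 2 ∂μ) atTop atTop := by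
  refine tendsto_atTop_atTop_of_monotone (fun t t' htt' => integral_mono
    (integrable_min_sq hf hf0 _) (integrable_min_sq hf hf0 _) fun ω => ?_) fun K => ?_
  · exact pow_le_pow_left₀ (le_min (hf0 ω) (by positivity)) (min_le_min_left _ (by gcongr)) 2
  by_contra! hK
  refine h (integrable_of_tendsto_of_integral_le (fun t => integrable_min_sq hf hf0 _)
    (fun t => ae_of_all _ fun ω => sq_nonneg _) (ae_of_all _ fun ω => ?_) fun t => (hK t).le)
  refine tendsto_const_nhds.congr' (eventually_atTop.2 ⟨⌈f ω / s⌉₊, fun t ht => ?_⟩)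
  dsimp only
  rw [min_eq_left ((div_le_iff₀ hs).1 ((Nat.le_ceil _).trans (by exact_mod_cast ht)))]

variable {a : ℕ → Ω → ℝ}

lemma integral_min_sq_le_integral_queue (hs : 0 < s) (hmeas : ∀ t, Measurable (a t))
    (ha0 : ∀ t ω, 0 ≤ a t ω) (hident : ∀ t, IdentDistrib (a t) (a 0) μ μ)
    (hint : Integrable (a 0) μ) (t : ℕ) :
    (∫ ω, min (a 0 ω) (t * s) ^ 2 ∂μ) / (2 * s) - ∫ ω, a 0 ω ∂μ ≤ ∫ ω, queue s a t ω ∂μ := by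
  have hint' (u : ℕ) : Integrable (a u) μ := (hident u).integrable_iff.2 hint
  have hpos (u : ℕ) (c : ℝ) : Integrable (fun ω => max (a u ω - c) 0) μ :=
    ((hint' u).sub (integrable_const c)).pos_part
  have hQ : Integrable (queue s a t) μ := memLp_one_iff_integrable.1
    (memLp_queue hs.le hmeas ha0 (fun u => memLp_one_iff_integrable.2 (hint' u)) t)
  calc (∫ ω, min (a 0 ω) (t * s) ^ 2 ∂μ) / (2 * s) - ∫ ω, a 0 ω ∂μ
      = ∫ ω, (min (a 0 ω) (t * s) ^ 2 / (2 * s) - a 0 ω) ∂μ := by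
        rw [integral_sub ((integrable_min_sq (hmeas 0) (ha0 0) _).div_const _) hint,
          integral_div]
    _ ≤ ∫ ω, ∑ u ∈ range t, max (a 0 ω - (t - u) * s) 0 ∂μ :=
        integral_mono (((integrable_min_sq (hmeas 0) (ha0 0) _).div_const _).sub hint)
          (integrable_finsetSum _ fun u _ => hpos 0 _)
          fun ω => sq_min_div_sub_le_sum_max_sub (ha0 0 ω) hs t
    _ = ∑ u ∈ range t, ∫ ω, max (a u ω - (t - u) * s) 0 ∂μ := by
        rw [integral_finsetSum _ fun u _ => hpos 0 _]
        refine sum_congr rfl fun u _ => ((hident u).comp (u := fun x => max (x - (t - u) * s) 0)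
          ((measurable_id.sub_const _).max measurable_const)).integral_eq.symm
    _ = ∫ ω, ∑ u ∈ range t, max (a u ω - (t - u) * s) 0 ∂μ :=
        (integral_finsetSum _ fun u _ => hpos u _).symm
    _ ≤ ∫ ω, queue s a t ω ∂μ :=
        integral_mono (integrable_finsetSum _ fun u _ => hpos u _) hQ
          (sum_max_sub_le_queue hs.le ha0 t)

lemma tendsto_integral_queue_atTop (hs : 0 < s) (hmeas : ∀ t, Measurable (a t))
    (ha0 : ∀ t ω, 0 ≤ a t ω) (hident : ∀ t, IdentDistrib (a t) (a 0) μ μ)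
    (hint : Integrable (a 0) μ) (h2 : ¬ Integrable (fun ω => a 0 ω ^ 2) μ) :
    Tendsto (fun t : ℕ => ∫ ω, queue s a t ω ∂μ) atTop atTop :=
  tendsto_atTop_mono (integral_min_sq_le_integral_queue hs hmeas ha0 hident hint)
    (tendsto_atTop_add_const_right _ _
      ((tendsto_integral_min_sq_atTop (hmeas 0) (ha0 0) hs h2).atTop_div_const (by positivity)))

end Divergence

theorem single_queue_stability_general
    {Ω : Type*} [MeasureSpace Ω] [IsProbabilityMeasure (ℙ : Measure Ω)]
    (a : ℕ → Ω → ℝ) (Q : ℕ → Ω → ℝ) (s : ℤ) (π ε σ2 : ℝ)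
    (hmeas : ∀ t, Measurable (a t))
    (hnonneg : ∀ t ω, 0 ≤ a t ω)
    (hindep : iIndepFun a ℙ)
    (hident : ∀ t, IdentDistrib (a t) (a 0) ℙ ℙ)
    (hmean : ∫ ω, a 0 ω = π)
    (hsecond : ∫ ω, (a 0 ω) ^ 2 ≤ σ2)
    (hε : 0 < ε)
    (hrate : π ≤ (s : ℝ) - ε)
    (hQ0 : ∀ ω, Q 0 ω = 0)
    (hQrec : ∀ t ω, Q (t + 1) ω = max (Q t ω + a t ω - (s : ℝ)) 0) :
    limsup (fun T : ℕ => (1 / (T : ℝ)) * ∑ t ∈ range T, ∫ ω, Q t ω) atTop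
      ≤ (σ2 + (s : ℝ) ^ 2) / (2 * ε) := by
  have hQ : Q = queue s a := by
    funext t ω
    induction t with
    | zero => exact hQ0 ω
    | succ t ih => rw [hQrec, ih, queue_succ]
  subst hQ
  have hs : (0 : ℝ) < s := by
    have : 0 ≤ ∫ ω, a 0 ω := integral_nonneg (hnonneg 0)
    linarith
  have hbound : 0 ≤ (σ2 + (s : ℝ) ^ 2) / (2 * ε) := by
    have := (integral_nonneg fun ω => sq_nonneg (a 0 ω)).trans hsecond
    positivity
  by_cases ha1 : Integrable (a 0) ℙ
  swap
  · simpa [integral_queue_eq_zero hmeas hnonneg hident ha1] using hbound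
  by_cases ha2 : Integrable (fun ω => a 0 ω ^ 2) ℙ
  · refine (limsup_cesaro_integral_queue_le hs.le hmeas hnonneg hindep hident ha2 hε
      (hmean.trans_le hrate)).trans ?_
    gcongr
  · rw [Real.limsup_of_not_isBoundedUnder (not_isBoundedUnder_of_tendsto_atTop
      (tendsto_cesaro_atTop (fun t => integral_nonneg (queue_nonneg t))
        (tendsto_integral_queue_atTop hs hmeas hnonneg hident ha1 ha2)))]
    exact hbound

/-- Stability of a single discrete-time queue `Q(t+1) = max(Q(t) + a(t) − s, 0)`
with i.i.d. nonnegative integer arrivals of mean `π ≤ s − ε` and second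
moment at most `σ²`: the time-averaged expected queue length satisfies
`limsup_T (1/T) Σ_{t<T} E[Q(t)] ≤ (σ² + s²)/(2ε)`. -/
theorem single_queue_stability
    {Ω : Type*} [MeasureSpace Ω] [IsProbabilityMeasure (ℙ : Measure Ω)]
    (a : ℕ → Ω → ℝ) (Q : ℕ → Ω → ℝ) (s : ℤ) (π ε σ2 : ℝ)
    (hmeas : ∀ t, Measurable (a t))
    (hnonneg : ∀ t ω, 0 ≤ a t ω)
    (hint : ∀ t ω, ∃ n : ℕ, a t ω = n)
    (hindep : iIndepFun a ℙ)
    (hident : ∀ t, IdentDistrib (a t) (a 0) ℙ ℙ)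
    (hmean : ∫ ω, a 0 ω = π)
    (hsecond : ∫ ω, (a 0 ω) ^ 2 ≤ σ2)
    (hε : 0 < ε)
    (hrate : π ≤ (s : ℝ) - ε)
    (hQ0 : ∀ ω, Q 0 ω = 0)
    (hQrec : ∀ t ω, Q (t + 1) ω = max (Q t ω + a t ω - (s : ℝ)) 0) :
    limsup (fun T : ℕ => (1 / (T : ℝ)) * ∑ t ∈ range T, ∫ ω, Q t ω) atTop
      ≤ (σ2 + (s : ℝ) ^ 2) / (2 * ε) :=
  single_queue_stability_general a Q s π ε σ2 hmeas hnonneg hindep hident hmean hsecond hε hrate hQ0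
    hQrec
end
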